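/- arXiv:2010.14260 — 3 statements merged into one kernel-verified Lean document; each statement's English description precedes it below -/
import Mathlib

section
/- Let σ, σ' be two independent random permutations distributed according to the Mallows model M(σ_0, θ). Then (1/2)·E[d(σ, σ')] ≤ E[d(σ, σ_0)] ≤ E[d(σ, σ')]. -/
/-! Lower bound: Kendall's distance satisfies the triangle inequality, so
`d(σ,σ') ≤ d(σ,σ₀) + d(σ',σ₀)`; average over the two independent samples.

Upper bound: `E[d(σ,π)]` is the sum over pairs `i < j` of the probability that `σ` and `π` order
the pair differently. If `π` orders `{i,j}` like `σ₀`, this is the same probability as for `σ₀`;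
otherwise it is the complementary one, which is at least as large: exchanging `σ i` and `σ j`
maps the permutations discordant with `σ₀` on `{i,j}` bijectively onto the concordant ones and
does not decrease the Mallows weight. So `σ₀` minimises `π ↦ E[d(σ,π)]`; average over `π = σ'`. -/

open Finset

/-- Kendall's-τ distance: number of pairs `i < j` on which `σ` and `π` disagree in
relative order. -/
def kendall (n : ℕ) (σ π : Equiv.Perm (Fin n)) : ℕ :=
  (Finset.univ.filter (fun p : Fin n × Fin n =>
    p.1 < p.2 ∧ ((σ p.1 < σ p.2 ∧ π p.2 < π p.1) ∨ (σ p.2 < σ p.1 ∧ π p.1 < π p.2)))).card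

/-- Inversion vector coordinate (0-indexed `j`): `V_j(σ) = #{i > j : σ(i) < σ(j)}`. -/
def invVec (n : ℕ) (σ : Equiv.Perm (Fin n)) (j : Fin n) : ℕ :=
  (Finset.univ.filter (fun i : Fin n => j < i ∧ σ i < σ j)).card

/-- `ψ_{n,j} = (1 - exp(-θ(n-j+1)))/(1 - exp(-θ))`, with 1-indexed `j`. -/
noncomputable def psiFac (n : ℕ) (θ : ℝ) (j : ℕ) : ℝ :=
  (1 - Real.exp (-θ * ((n : ℝ) - j + 1))) / (1 - Real.exp (-θ))

/-- `ψ_n = ∏_{j=1}^{n-1} ψ_{n,j}`. -/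
noncomputable def psiProd (n : ℕ) (θ : ℝ) : ℝ :=
  ∏ j ∈ Finset.range (n - 1), psiFac n θ (j + 1)

/-- Mallows probability mass function with center `σ₀` and dispersion `θ`. -/
noncomputable def mallows (n : ℕ) (θ : ℝ) (σ₀ σ : Equiv.Perm (Fin n)) : ℝ :=
  Real.exp (-θ * kendall n σ σ₀) / ∑ π : Equiv.Perm (Fin n), Real.exp (-θ * kendall n π σ₀)

namespace Kendall

variable {n : ℕ}

def Discordant (σ π : Equiv.Perm (Fin n)) (i j : Fin n) : Prop :=
  (σ i < σ j ∧ π j < π i) ∨ (σ j < σ i ∧ π i < π j)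

instance (σ π : Equiv.Perm (Fin n)) (i j : Fin n) : Decidable (Discordant σ π i j) := by
  unfold Discordant; infer_instance

lemma discordant_comm {σ π : Equiv.Perm (Fin n)} {i j : Fin n} :
    Discordant σ π i j ↔ Discordant π σ i j := by
  unfold Discordant; tauto

lemma discordant_symm {σ π : Equiv.Perm (Fin n)} {i j : Fin n} :
    Discordant σ π i j ↔ Discordant σ π j i := by
  unfold Discordant; tauto

lemma not_discordant_self (σ π : Equiv.Perm (Fin n)) (i : Fin n) : ¬ Discordant σ π i i := by
  simp [Discordant]

lemma discordant_iff_not_iff {σ π : Equiv.Perm (Fin n)} {i j : Fin n} (hij : i ≠ j) :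
    Discordant σ π i j ↔ ¬ (σ i < σ j ↔ π i < π j) := by
  have hσ := σ.injective.ne hij
  have hπ := π.injective.ne hij
  unfold Discordant
  grind

lemma discordant_iff_xor {σ π ρ : Equiv.Perm (Fin n)} {i j : Fin n} (hij : i ≠ j) :
    Discordant σ π i j ↔ Xor (Discordant σ ρ i j) (Discordant π ρ i j) := by
  rw [xor_iff_not_iff, discordant_iff_not_iff hij, discordant_iff_not_iff hij,
    discordant_iff_not_iff hij]
  tauto

lemma kendall_eq_card_discordant (σ π : Equiv.Perm (Fin n)) :
    kendall n σ π = #{p : Fin n × Fin n | p.1 < p.2 ∧ Discordant σ π p.1 p.2} :=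
  rfl

lemma kendall_comm (σ π : Equiv.Perm (Fin n)) : kendall n σ π = kendall n π σ := by
  simp only [kendall_eq_card_discordant, discordant_comm (σ := σ)]

lemma kendall_triangle (σ π ρ : Equiv.Perm (Fin n)) :
    kendall n σ π ≤ kendall n σ ρ + kendall n ρ π := by
  rw [kendall_comm ρ π]
  refine (card_le_card fun p hp => ?_).trans (card_union_le _ _)
  simp only [mem_filter, mem_union, mem_univ, true_and] at hp ⊢
  have h := ((discordant_iff_xor (ρ := ρ) hp.1.ne).1 hp.2).or
  tauto

lemma two_mul_kendall (σ π : Equiv.Perm (Fin n)) :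
    2 * kendall n σ π = #{p : Fin n × Fin n | Discordant σ π p.1 p.2} := by
  have hswap : #{p : Fin n × Fin n | p.1 < p.2 ∧ Discordant σ π p.1 p.2}
      = #{p : Fin n × Fin n | p.2 < p.1 ∧ Discordant σ π p.1 p.2} :=
    card_equiv (Equiv.prodComm _ _) fun p => by simp [discordant_symm]
  have hdisj : Disjoint (α := Finset (Fin n × Fin n)) {p | p.1 < p.2 ∧ Discordant σ π p.1 p.2}
      {p | p.2 < p.1 ∧ Discordant σ π p.1 p.2} :=
    disjoint_filter.2 fun p _ h1 h2 => h1.1.asymm h2.1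
  rw [two_mul, kendall_eq_card_discordant]
  nth_rw 2 [hswap]
  rw [← card_union_of_disjoint hdisj]
  congr 1; ext p
  rcases lt_trichotomy p.1 p.2 with h | h | h
  · simp [h, h.asymm]
  · simp [h, not_discordant_self]
  · simp [h, h.asymm]

lemma kendall_mul_right (σ π ρ : Equiv.Perm (Fin n)) :
    kendall n (σ * ρ) (π * ρ) = kendall n σ π := by
  refine Nat.eq_of_mul_eq_mul_left two_pos ?_
  rw [two_mul_kendall, two_mul_kendall]
  refine card_equiv (ρ.prodCongr ρ) fun p => ?_
  rw [mem_filter_univ, mem_filter_univ]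
  simp [Discordant, Prod.map]

open Equiv in
lemma discordant_mul_swap_add_le {σ π : Equiv.Perm (Fin n)} {a b : Fin n}
    (hab : Discordant σ π a b) (i j : Fin n) :
    ((if Discordant (σ * swap a b) π i j then 1 else 0) +
        (if Discordant σ (π * swap a b) i j then 1 else 0) : ℕ) ≤
      (if Discordant σ π i j then 1 else 0) +
        (if Discordant (σ * swap a b) (π * swap a b) i j then 1 else 0) := by
  simp only [Discordant, Perm.mul_apply, swap_apply_def] at *
  split_ifs <;> subst_vars <;> grind

lemma kendall_mul_swap_le {σ π : Equiv.Perm (Fin n)} {a b : Fin n} (hab : Discordant σ π a b) :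
    kendall n (σ * Equiv.swap a b) π ≤ kendall n σ π := by
  set s := Equiv.swap a b
  -- `d(σs,π) = d(σ,πs)` and `d(σs,πs) = d(σ,π)`, so it suffices to compare pair by pair
  -- `d(σs,π) + d(σ,πs)` with `d(σ,π) + d(σs,πs)`.
  have hshift : kendall n (σ * s) π = kendall n σ (π * s) := by
    rw [← kendall_mul_right (σ * s) π s, mul_assoc, Equiv.swap_mul_self, mul_one]
  have hsum : 2 * kendall n (σ * s) π + 2 * kendall n σ (π * s) ≤
      2 * kendall n σ π + 2 * kendall n (σ * s) (π * s) := by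
    simp only [two_mul_kendall, card_filter, ← sum_add_distrib]
    exact sum_le_sum fun p _ => discordant_mul_swap_add_le hab p.1 p.2
  rw [kendall_mul_right, ← hshift] at hsum
  omega

lemma sum_mul_kendall_eq {R : Type*} [CommSemiring R] (w : Equiv.Perm (Fin n) → R)
    (π : Equiv.Perm (Fin n)) :
    ∑ σ, w σ * kendall n σ π =
      ∑ p : Fin n × Fin n with p.1 < p.2, ∑ σ with Discordant σ π p.1 p.2, w σ := by
  simp only [kendall_eq_card_discordant, card_eq_sum_ones, Nat.cast_sum, Nat.cast_one, mul_sum,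
    mul_one]
  exact sum_comm' fun σ p => by simp [and_comm]

lemma discordant_mul_swap_iff {σ π : Equiv.Perm (Fin n)} {a b : Fin n} (hab : a ≠ b) :
    Discordant (σ * Equiv.swap a b) π a b ↔ ¬ Discordant σ π a b := by
  rw [discordant_iff_not_iff hab, discordant_iff_not_iff hab]
  have hσ := σ.injective.ne hab
  simp only [Equiv.Perm.mul_apply, Equiv.swap_apply_left, Equiv.swap_apply_right]
  grind

end Kendall

section WeightedSums

variable {α : Type*} [Fintype α] {w : α → ℝ}

lemma le_sum_mul_of_forall_le (hw₀ : ∀ a, 0 ≤ w a) (hw₁ : ∑ a, w a = 1) {c : ℝ} {g : α → ℝ}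
    (h : ∀ a, c ≤ g a) : c ≤ ∑ a, w a * g a :=
  calc c = ∑ a, w a * c := by rw [← sum_mul, hw₁, one_mul]
    _ ≤ ∑ a, w a * g a := sum_le_sum fun a _ => mul_le_mul_of_nonneg_left (h a) (hw₀ a)

lemma sum_sum_mul_le_two_mul_sum (hw₀ : ∀ a, 0 ≤ w a) (hw₁ : ∑ a, w a = 1) {d : α → α → ℝ}
    {f : α → ℝ} (h : ∀ a b, d a b ≤ f a + f b) :
    ∑ a, ∑ b, w a * w b * d a b ≤ 2 * ∑ a, w a * f a :=
  calc ∑ a, ∑ b, w a * w b * d a b ≤ ∑ a, ∑ b, w a * w b * (f a + f b) :=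
        sum_le_sum fun a _ => sum_le_sum fun b _ =>
          mul_le_mul_of_nonneg_left (h a b) (mul_nonneg (hw₀ a) (hw₀ b))
    _ = 2 * ∑ a, w a * f a := by
        simp only [mul_add, sum_add_distrib, ← sum_mul, ← mul_sum, hw₁, mul_one]
        rw [sum_comm]
        simp [← sum_mul, hw₁, two_mul]

end WeightedSums


namespace Mallows

open Kendall

variable {n : ℕ}

lemma mallows_nonneg (θ : ℝ) (σ₀ σ : Equiv.Perm (Fin n)) : 0 ≤ mallows n θ σ₀ σ := by
  unfold mallows; positivity

lemma sum_mallows (θ : ℝ) (σ₀ : Equiv.Perm (Fin n)) : ∑ σ, mallows n θ σ₀ σ = 1 := by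
  simp only [mallows, ← sum_div]
  exact div_self (sum_pos (fun _ _ => Real.exp_pos _) univ_nonempty).ne'

variable {θ : ℝ} {σ₀ : Equiv.Perm (Fin n)}

lemma mallows_le_mallows_mul_swap (hθ : 0 ≤ θ) {σ : Equiv.Perm (Fin n)} {a b : Fin n}
    (hab : Discordant σ σ₀ a b) : mallows n θ σ₀ σ ≤ mallows n θ σ₀ (σ * Equiv.swap a b) := by
  have hk : (kendall n (σ * Equiv.swap a b) σ₀ : ℝ) ≤ kendall n σ σ₀ := by
    exact_mod_cast kendall_mul_swap_le hab
  unfold mallows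
  refine div_le_div_of_nonneg_right (Real.exp_le_exp.2 ?_) (by positivity)
  nlinarith

lemma sum_mallows_discordant_le_concordant (hθ : 0 ≤ θ) {a b : Fin n} (hab : a ≠ b) :
    ∑ σ with Discordant σ σ₀ a b, mallows n θ σ₀ σ ≤
      ∑ σ with ¬ Discordant σ σ₀ a b, mallows n θ σ₀ σ :=
  calc ∑ σ with Discordant σ σ₀ a b, mallows n θ σ₀ σ
      ≤ ∑ σ with Discordant σ σ₀ a b, mallows n θ σ₀ (σ * Equiv.swap a b) :=
        sum_le_sum fun σ hσ => mallows_le_mallows_mul_swap hθ (mem_filter.1 hσ).2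
    _ = ∑ σ with ¬ Discordant σ σ₀ a b, mallows n θ σ₀ σ :=
        sum_equiv (Equiv.mulRight (Equiv.swap a b))
          (fun σ => by simp [discordant_mul_swap_iff hab]) fun _ _ => rfl

lemma sum_mallows_mul_kendall_le (hθ : 0 ≤ θ) (π : Equiv.Perm (Fin n)) :
    ∑ σ, mallows n θ σ₀ σ * kendall n σ σ₀ ≤ ∑ σ, mallows n θ σ₀ σ * kendall n σ π := by
  rw [sum_mul_kendall_eq, sum_mul_kendall_eq]
  refine sum_le_sum fun p hp => ?_
  have hne : p.1 ≠ p.2 := (mem_filter.1 hp).2.ne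
  by_cases hπ : Discordant π σ₀ p.1 p.2
  · calc _ ≤ ∑ σ with ¬ Discordant σ σ₀ p.1 p.2, mallows n θ σ₀ σ :=
          sum_mallows_discordant_le_concordant hθ hne
      _ = _ := by
          congr 1
          exact filter_congr fun σ _ => by
            simp [discordant_iff_xor (π := π) (ρ := σ₀) hne, hπ, xor_def]
  · refine le_of_eq (congr_arg₂ _ (filter_congr fun σ _ => ?_) rfl)
    simp [discordant_iff_xor (π := π) (ρ := σ₀) hne, hπ, xor_def]

end Mallows

open Kendall Mallows

/-- For independent `σ, σ' ~ M(σ₀,θ)`: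
`(1/2)·E[d(σ,σ')] ≤ E[d(σ,σ₀)] ≤ E[d(σ,σ')]`. -/
theorem expected_pairwise_distance_bounds (n : ℕ) (θ : ℝ) (hθ : 0 < θ)
    (σ₀ : Equiv.Perm (Fin n)) :
    (1 / 2) * (∑ σ : Equiv.Perm (Fin n), ∑ σ' : Equiv.Perm (Fin n),
        mallows n θ σ₀ σ * mallows n θ σ₀ σ' * kendall n σ σ') ≤
      (∑ σ : Equiv.Perm (Fin n), mallows n θ σ₀ σ * kendall n σ σ₀) ∧
    (∑ σ : Equiv.Perm (Fin n), mallows n θ σ₀ σ * kendall n σ σ₀) ≤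
      ∑ σ : Equiv.Perm (Fin n), ∑ σ' : Equiv.Perm (Fin n),
        mallows n θ σ₀ σ * mallows n θ σ₀ σ' * kendall n σ σ' := by
  constructor
  · have htriangle (σ σ' : Equiv.Perm (Fin n)) :
        (kendall n σ σ' : ℝ) ≤ kendall n σ σ₀ + kendall n σ' σ₀ := by
      exact_mod_cast kendall_comm σ' σ₀ ▸ kendall_triangle σ σ' σ₀
    linarith [sum_sum_mul_le_two_mul_sum (mallows_nonneg θ σ₀) (sum_mallows θ σ₀) htriangle]
  · calc ∑ σ, mallows n θ σ₀ σ * kendall n σ σ₀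
        ≤ ∑ σ', mallows n θ σ₀ σ' * ∑ σ, mallows n θ σ₀ σ * kendall n σ σ' :=
          le_sum_mul_of_forall_le (mallows_nonneg θ σ₀) (sum_mallows θ σ₀)
            (sum_mallows_mul_kendall_le hθ.le)
      _ = _ := by
          simp_rw [mul_sum]
          rw [sum_comm]
          exact sum_congr rfl fun _ _ => sum_congr rfl fun _ _ => by ring
end

section
/- For two independent Mallows samples with the same center, the expected pairwise Kendall distance is monotone decreasing in the dispersion parameters: if θ ≤ θ', and σ_θ ~ M(σ_0, θ), σ_{θ'} ~ M(σ_0, θ'), τ ~ M(σ_0, θ'') independent, then E[d(σ_{θ'}, τ)] ≤ E[d(σ_θ, τ)]. -/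
/-!
Right multiplication by `σ₀` preserves Kendall's distance, so we may take `σ₀ = 1`. The
inversion vector `(V_j)` maps `S_n` bijectively onto the box `∏ j, Fin (n - j)`, a finite
distributive lattice, and turns `M(1, θ)` into the product law `∝ exp (-θ ∑ j, V_j)`. For
`θ ≤ θ'` these laws satisfy Holley's condition, so it suffices that the expected distance
`σ ↦ E[d(σ, τ)]` is monotone in the code. Raising `V_j` by one is `σ ↦ σ * swap j p`, where `p`
is the position right of `j` holding the least value above `σ j`, and this can only increase the
expected distance because under a Mallows law centred at `1`, `τ a < τ b` is at least as likely as
`τ b < τ a` for `a < b`, and `τ v < τ p` at least as likely as `τ v < τ j` for `v < j < p`.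
-/

open Finset

section Gibbs
variable {α : Type*} [Fintype α]

noncomputable def gibbs (s : α → ℝ) (θ : ℝ) (a : α) : ℝ :=
  Real.exp (-θ * s a) / ∑ b, Real.exp (-θ * s b)

theorem gibbs_nonneg (s : α → ℝ) (θ : ℝ) (a : α) : 0 ≤ gibbs s θ a := by
  unfold gibbs; positivity

theorem sum_gibbs [Nonempty α] (s : α → ℝ) (θ : ℝ) : ∑ a, gibbs s θ a = 1 := by
  simp only [gibbs]
  rw [← sum_div, div_self (sum_pos (fun _ _ => Real.exp_pos _) univ_nonempty).ne']

theorem gibbs_comp_equiv {β : Type*} [Fintype β] (e : β ≃ α) (s : α → ℝ) (θ : ℝ) (b : β) :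
    gibbs (s ∘ e) θ b = gibbs s θ (e b) := by
  simp only [gibbs, Function.comp_apply, Equiv.sum_comp e fun a => Real.exp (-θ * s a)]

theorem gibbs_mul_gibbs_le [Lattice α] {s : α → ℝ} (hs : Monotone s)
    (hmod : ∀ a b, s (a ⊓ b) + s (a ⊔ b) = s a + s b) {θ θ' : ℝ} (hθ : θ ≤ θ') (a b : α) :
    gibbs s θ' a * gibbs s θ b ≤ gibbs s θ' (a ⊓ b) * gibbs s θ (a ⊔ b) := by
  simp only [gibbs, div_mul_div_comm, ← Real.exp_add]
  gcongr ?_ / _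
  refine Real.exp_le_exp.2 ?_
  rw [show s (a ⊔ b) = s a + s b - s (a ⊓ b) by linarith [hmod a b]]
  nlinarith [mul_nonneg (sub_nonneg.2 hθ) (sub_nonneg.2 (hs (inf_le_left : a ⊓ b ≤ a)))]

theorem sum_mul_gibbs_le_of_le [DistribLattice α] [Nonempty α] {s μ : α → ℝ} (hs : Monotone s)
    (hmod : ∀ a b, s (a ⊓ b) + s (a ⊔ b) = s a + s b) (hμ₀ : 0 ≤ μ) (hμ : Monotone μ)
    {θ θ' : ℝ} (hθ : θ ≤ θ') : ∑ a, μ a * gibbs s θ' a ≤ ∑ a, μ a * gibbs s θ a :=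
  holley _ _ μ hμ₀ (gibbs_nonneg s θ') (gibbs_nonneg s θ) hμ (by rw [sum_gibbs, sum_gibbs])
    (gibbs_mul_gibbs_le hs hmod hθ)

end Gibbs

section PiFin
variable {ι : Type*} [Fintype ι] {m : ι → ℕ}

def sumVal (c : ∀ i, Fin (m i)) : ℝ := ∑ i, ((c i : ℕ) : ℝ)

theorem sumVal_mono : Monotone (sumVal (m := m)) :=
  fun _ _ h => sum_le_sum fun i _ => by exact_mod_cast h i

theorem sumVal_inf_add_sumVal_sup (a b : ∀ i, Fin (m i)) :
    sumVal (a ⊓ b) + sumVal (a ⊔ b) = sumVal a + sumVal b := by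
  simp only [sumVal, ← sum_add_distrib]
  refine sum_congr rfl fun i _ => ?_
  simp only [Pi.inf_apply, Pi.sup_apply, Fin.coe_min, Fin.coe_max]
  exact_mod_cast min_add_max (a i : ℕ) (b i)

theorem monotone_of_le_update_succ [DecidableEq ι] {β : Type*} [Preorder β]
    {f : (∀ i, Fin (m i)) → β}
    (hf : ∀ c i (x : Fin (m i)), (c i : ℕ) + 1 = x → f c ≤ f (Function.update c i x)) :
    Monotone f := by
  refine (monotone_iff_forall_covBy f).2 fun a b hab => ?_
  obtain ⟨i, hi, hne⟩ := Pi.covBy_iff.1 hab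
  have hb : b = Function.update a i (b i) := by
    funext j
    by_cases hj : j = i
    · subst hj; simp
    · simp [hj, hne j hj]
  rw [hb]
  exact hf a i (b i) (Nat.covBy_iff_add_one_eq.1 (Fin.covBy_iff.1 hi))

end PiFin

section AscentSum
variable {α : Type*} [Fintype α]

theorem sum_sum_eq_of_eq_zero_off_pair [DecidableEq α] {M : Type*} [AddCommMonoid M]
    (h : α → α → M) {p k : α} (hpk : p ≠ k)
    (h₀ : ∀ i j, i ≠ p → i ≠ k → j ≠ p → j ≠ k → h i j = 0) :
    ∑ i, ∑ j, h i j = h p p + h p k + h k p + h k k +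
      ∑ v ∈ ({p, k} : Finset α)ᶜ, (h p v + h k v + h v p + h v k) := by
  have hout : ∀ v ∈ ({p, k} : Finset α)ᶜ, v ≠ p ∧ v ≠ k := by simp
  have hrow : ∀ i, ∑ j, h i j = h i p + h i k + ∑ v ∈ ({p, k} : Finset α)ᶜ, h i v := by
    intro i
    rw [← sum_add_sum_compl {p, k}, sum_pair hpk]
  have hcol : ∀ i ∈ ({p, k} : Finset α)ᶜ, ∑ j, h i j = h i p + h i k := by
    intro i hi
    have hzero : ∑ v ∈ ({p, k} : Finset α)ᶜ, h i v = 0 :=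
      sum_eq_zero fun v hv => h₀ i v (hout i hi).1 (hout i hi).2 (hout v hv).1 (hout v hv).2
    rw [hrow, hzero, add_zero]
  rw [← sum_add_sum_compl {p, k}, sum_pair hpk, hrow p, hrow k, sum_congr rfl hcol]
  simp only [sum_add_distrib]
  abel

variable [LinearOrder α]

def ascentSum (f : α → α → ℝ) (σ : Equiv.Perm α) : ℝ :=
  ∑ i, ∑ j, if σ i < σ j then f i j else 0

theorem ascentSum_mul_swap (f : α → α → ℝ) (σ : Equiv.Perm α) (p k : α) :
    ascentSum f (σ * Equiv.swap p k) =
      ascentSum (fun i j => f (Equiv.swap p k i) (Equiv.swap p k j)) σ := by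
  unfold ascentSum
  rw [← Equiv.sum_comp (Equiv.swap p k)]
  refine sum_congr rfl fun i _ => ?_
  rw [← Equiv.sum_comp (Equiv.swap p k)]
  simp [Equiv.swap_apply_self]

theorem ascentSum_sub (f g : α → α → ℝ) (σ : Equiv.Perm α) :
    ascentSum f σ - ascentSum g σ = ascentSum (f - g) σ := by
  unfold ascentSum
  simp only [← sum_sub_distrib]
  refine sum_congr rfl fun i _ => sum_congr rfl fun j _ => ?_
  split_ifs <;> simp

theorem ascentSum_le_mul_swap (f : α → α → ℝ) (σ : Equiv.Perm α) {p k : α} (hσ : σ p < σ k)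
    (hf : f p k ≤ f k p)
    (hbetween : ∀ v, σ p < σ v → σ v < σ k → f p v + f v k ≤ f k v + f v p) :
    ascentSum f σ ≤ ascentSum f (σ * Equiv.swap p k) := by
  have hpk : p ≠ k := fun h => hσ.ne (by rw [h])
  rw [ascentSum_mul_swap, ← sub_nonneg, ascentSum_sub, ascentSum,
    sum_sum_eq_of_eq_zero_off_pair _ hpk]
  · simp only [Pi.sub_apply, Equiv.swap_apply_left, Equiv.swap_apply_right, lt_irrefl, if_false,
      hσ, if_true, hσ.not_gt, add_zero, zero_add]
    refine add_nonneg (sub_nonneg.2 hf) (sum_nonneg fun v hv => ?_)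
    obtain ⟨hvp, hvk⟩ : v ≠ p ∧ v ≠ k := by simpa using hv
    rw [Equiv.swap_apply_of_ne_of_ne hvp hvk]
    rcases lt_trichotomy (σ v) (σ p) with hlt | heq | hgt
    · simp [hlt, hlt.trans hσ, hlt.not_gt, (hlt.trans hσ).not_gt]
    · exact absurd (σ.injective heq) hvp
    · rcases lt_or_gt_of_ne (σ.injective.ne hvk) with hlt' | hgt'
      · simp [hgt, hlt', hgt.not_gt, hlt'.not_gt]
        linarith [hbetween v hgt hlt']
      · simp [hgt, hgt', hgt.not_gt, hgt'.not_gt]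
  · intro i j hip hik hjp hjk
    simp [Equiv.swap_apply_of_ne_of_ne, *]
end AscentSum

section Kendall
variable {n : ℕ}

theorem kendall_eq_sum (σ π : Equiv.Perm (Fin n)) :
    kendall n σ π = ∑ i, ∑ j, if σ i < σ j ∧ π j < π i then 1 else 0 := by
  rw [kendall, card_filter, Fintype.sum_prod_type]
  calc ∑ i, ∑ j, (if i < j ∧ ((σ i < σ j ∧ π j < π i) ∨ (σ j < σ i ∧ π i < π j)) then 1 else 0)
      = ∑ i, ∑ j, ((if i < j ∧ σ i < σ j ∧ π j < π i then 1 else 0) +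
          if i < j ∧ σ j < σ i ∧ π i < π j then 1 else 0) := by
        refine sum_congr rfl fun i _ => sum_congr rfl fun j _ => ?_
        split_ifs <;> grind
    _ = ∑ i, ∑ j, ((if i < j ∧ σ i < σ j ∧ π j < π i then 1 else 0) +
          if j < i ∧ σ i < σ j ∧ π j < π i then 1 else 0) := by
        simp only [sum_add_distrib]
        rw [sum_comm (f := fun i j => if i < j ∧ σ j < σ i ∧ π i < π j then 1 else 0)]
    _ = _ := by
        refine sum_congr rfl fun i _ => sum_congr rfl fun j _ => ?_
        split_ifs <;> grind

theorem kendall_eq_ascentSum (σ π : Equiv.Perm (Fin n)) :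
    (kendall n σ π : ℝ) = ascentSum (fun i j => if π j < π i then 1 else 0) σ := by
  simp [kendall_eq_sum, ascentSum, ite_and]

theorem kendall_mul_right (σ π ρ : Equiv.Perm (Fin n)) :
    kendall n (σ * ρ) (π * ρ) = kendall n σ π := by
  simp only [kendall_eq_sum, Equiv.Perm.mul_apply]
  rw [← Equiv.sum_comp ρ (fun i => ∑ j, if σ i < σ j ∧ π j < π i then 1 else 0)]
  exact sum_congr rfl fun i _ =>
    Equiv.sum_comp ρ (fun j => if σ (ρ i) < σ j ∧ π j < π (ρ i) then 1 else 0)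

theorem kendall_one_le_mul_swap {a b : Fin n} (hab : a < b) {σ : Equiv.Perm (Fin n)}
    (hσ : σ a < σ b) : kendall n σ 1 ≤ kendall n (σ * Equiv.swap a b) 1 := by
  rw [← Nat.cast_le (α := ℝ), kendall_eq_ascentSum, kendall_eq_ascentSum]
  refine ascentSum_le_mul_swap _ σ hσ (by simp [hab, hab.not_gt]) fun v _ _ => ?_
  simp only [Equiv.Perm.one_apply]
  split_ifs <;> grind

theorem kendall_one_eq_sum_invVec (σ : Equiv.Perm (Fin n)) :
    kendall n σ 1 = ∑ j, invVec n σ j := by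
  rw [kendall_eq_sum, sum_comm]
  simp only [invVec, card_filter, Equiv.Perm.one_apply, and_comm]

end Kendall

section Mallows
variable {n : ℕ}

theorem mallows_eq_gibbs (θ : ℝ) (σ₀ : Equiv.Perm (Fin n)) :
    mallows n θ σ₀ = gibbs (fun σ => (kendall n σ σ₀ : ℝ)) θ :=
  rfl

theorem sum_mallows (θ : ℝ) (σ₀ : Equiv.Perm (Fin n)) : ∑ σ, mallows n θ σ₀ σ = 1 := by
  rw [mallows_eq_gibbs, sum_gibbs]

theorem mallows_mul_right (θ : ℝ) (σ₀ π : Equiv.Perm (Fin n)) :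
    mallows n θ σ₀ (π * σ₀) = mallows n θ 1 π := by
  have h : ∀ π, kendall n (π * σ₀) σ₀ = kendall n π 1 := fun π => by
    simpa using kendall_mul_right π 1 σ₀
  simp only [mallows, h]
  rw [← Equiv.sum_comp (Equiv.mulRight σ₀)]
  simp [h]

theorem mallows_mul_swap_le {θ : ℝ} (hθ : 0 ≤ θ) {a b : Fin n} (hab : a < b)
    {π : Equiv.Perm (Fin n)} (hπ : π a < π b) :
    mallows n θ 1 (π * Equiv.swap a b) ≤ mallows n θ 1 π := by
  have h : (kendall n π 1 : ℝ) ≤ kendall n (π * Equiv.swap a b) 1 := by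
    exact_mod_cast kendall_one_le_mul_swap hab hπ
  unfold mallows
  gcongr ?_ / _
  exact Real.exp_le_exp.2 (by nlinarith)

theorem sum_filter_mul_swap_le {θ : ℝ} (hθ : 0 ≤ θ) {a b : Fin n} (hab : a < b)
    (P : Equiv.Perm (Fin n) → Prop) [DecidablePred P] (hP : ∀ π, P π → π a < π b) :
    ∑ π with P (π * Equiv.swap a b), mallows n θ 1 π ≤ ∑ π with P π, mallows n θ 1 π := by
  rw [sum_filter, sum_filter, ← Equiv.sum_comp (Equiv.mulRight (Equiv.swap a b))]
  refine sum_le_sum fun π _ => ?_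
  simp only [Equiv.coe_mulRight, mul_assoc, Equiv.swap_mul_self, mul_one]
  split_ifs with h
  · exact mallows_mul_swap_le hθ hab (hP π h)
  · rfl

noncomputable def precProb (θ : ℝ) (a b : Fin n) : ℝ := ∑ π with π a < π b, mallows n θ 1 π

theorem precProb_add_precProb (θ : ℝ) {a b : Fin n} (hab : a ≠ b) :
    precProb θ a b + precProb θ b a = 1 := by
  rw [← sum_mallows θ 1, ← sum_filter_add_sum_filter_not univ (fun π => π a < π b), precProb,
    precProb]
  congr 1
  refine sum_congr (filter_congr fun π _ => ?_) fun _ _ => rfl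
  exact ⟨fun h => h.not_gt, fun h => lt_of_le_of_ne (not_lt.1 h) (π.injective.ne hab.symm)⟩

theorem precProb_le_precProb_of_lt {θ : ℝ} (hθ : 0 ≤ θ) {a b : Fin n} (hab : a < b) :
    precProb θ b a ≤ precProb θ a b := by
  simpa [precProb] using sum_filter_mul_swap_le hθ hab (fun π => π a < π b) fun _ h => h

theorem precProb_le_precProb {θ : ℝ} (hθ : 0 ≤ θ) {v j p : Fin n} (hvj : v ≠ j) (hvp : v ≠ p)
    (hjp : j < p) : precProb θ v j ≤ precProb θ v p := by
  have hsplit := fun a b : Fin n => (sum_filter_add_sum_filter_not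
    (univ.filter fun π : Equiv.Perm (Fin n) => π v < π a) (fun π => π v < π b)
    (mallows n θ 1)).symm
  rw [precProb, precProb, hsplit j p, hsplit p j, filter_filter, filter_filter, filter_filter,
    filter_filter]
  gcongr ?_ + ?_
  · exact le_of_eq (sum_congr (filter_congr fun _ _ => and_comm) fun _ _ => rfl)
  · simpa [Equiv.swap_apply_of_ne_of_ne hvj hvp] using
      sum_filter_mul_swap_le hθ hjp (fun π => π v < π p ∧ ¬ π v < π j)
        (fun π h => (not_lt.1 h.2).trans_lt h.1)

end Mallows

section MeanKendall
variable {n : ℕ}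

noncomputable def meanKendall (θ : ℝ) (σ : Equiv.Perm (Fin n)) : ℝ :=
  ∑ π, mallows n θ 1 π * kendall n σ π

theorem meanKendall_nonneg (θ : ℝ) (σ : Equiv.Perm (Fin n)) : 0 ≤ meanKendall θ σ :=
  sum_nonneg fun π _ =>
    mul_nonneg (by rw [mallows_eq_gibbs]; exact gibbs_nonneg _ θ π) (Nat.cast_nonneg _)

theorem meanKendall_eq_ascentSum (θ : ℝ) (σ : Equiv.Perm (Fin n)) :
    meanKendall θ σ = ascentSum (fun i j => precProb θ j i) σ := by
  simp only [meanKendall, kendall_eq_ascentSum, ascentSum, precProb, mul_sum, sum_filter]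
  rw [sum_comm]
  refine sum_congr rfl fun i _ => ?_
  rw [sum_comm]
  refine sum_congr rfl fun j _ => ?_
  split_ifs <;> simp

theorem meanKendall_le_mul_swap {θ : ℝ} (hθ : 0 ≤ θ) {σ : Equiv.Perm (Fin n)} {j p : Fin n}
    (hjp : j < p) (hσ : σ j < σ p) (hgap : ∀ m, j < m → σ j < σ m → σ p ≤ σ m) :
    meanKendall θ σ ≤ meanKendall θ (σ * Equiv.swap j p) := by
  rw [meanKendall_eq_ascentSum, meanKendall_eq_ascentSum]
  refine ascentSum_le_mul_swap _ σ hσ (precProb_le_precProb_of_lt hθ hjp) fun v hjv hvp => ?_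
  have hvj : v < j := by
    rcases lt_trichotomy v j with h | rfl | h
    · exact h
    · exact absurd hjv (lt_irrefl _)
    · exact absurd (hgap v h hjv) hvp.not_ge
  have := precProb_le_precProb hθ hvj.ne (hvj.trans hjp).ne hjp
  linarith [precProb_add_precProb θ hvj.ne, precProb_add_precProb θ (hvj.trans hjp).ne]

end MeanKendall

section InversionCode
variable {n : ℕ}

theorem card_filter_split (P : Fin n → Prop) [DecidablePred P] (j : Fin n) :
    #{i | P i} = #{i | i < j ∧ P i} + (if P j then 1 else 0) + #{i | j < i ∧ P i} := by
  simp only [card_filter]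
  rw [← Fintype.sum_ite_eq' j fun i => if P i then 1 else 0, ← sum_add_distrib, ← sum_add_distrib]
  refine sum_congr rfl fun i _ => ?_
  rcases lt_trichotomy i j with h | rfl | h
  · simp [h, h.not_gt, h.ne]
  · simp
  · simp [h, h.not_gt, h.ne']

theorem card_filter_apply_lt (σ : Equiv.Perm (Fin n)) (v : Fin n) : #{i | σ i < v} = v := by
  rw [card_filter, Equiv.sum_comp σ (fun x => if x < v then 1 else 0), ← card_filter,
    filter_gt_eq_Iio, Fin.card_Iio]

theorem card_filter_lt_add_invVec (σ : Equiv.Perm (Fin n)) (j : Fin n) :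
    #{i | i < j ∧ σ i < σ j} + invVec n σ j = σ j := by
  simpa [invVec, card_filter_apply_lt] using (card_filter_split (fun i => σ i < σ j) j).symm

theorem invVec_lt (σ : Equiv.Perm (Fin n)) (j : Fin n) : invVec n σ j < n - j := by
  have h : invVec n σ j ≤ #(Ioi j) := card_le_card fun i hi => by simp_all
  rw [Fin.card_Ioi] at h
  omega

def invCode (σ : Equiv.Perm (Fin n)) : ∀ j : Fin n, Fin (n - j) :=
  fun j => ⟨invVec n σ j, invVec_lt σ j⟩

theorem le_apply_of_invVec_eq {σ π : Equiv.Perm (Fin n)} {j : Fin n} (hlt : ∀ i < j, σ i = π i)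
    (hj : invVec n σ j = invVec n π j) : π j ≤ σ j := by
  -- if `σ j < π j`, counting the positions whose `σ`-value is below `π j` gives `π j + 1`
  by_contra! h
  have hπ := card_filter_lt_add_invVec π j
  have hσ := card_filter_split (fun i => σ i < π j) j
  rw [card_filter_apply_lt, if_pos h] at hσ
  have hleft : #{i | i < j ∧ σ i < π j} = #{i | i < j ∧ π i < π j} :=
    congrArg card (filter_congr fun i _ => and_congr_right fun hi => by rw [hlt i hi])
  have hright : invVec n σ j ≤ #{i | j < i ∧ σ i < π j} :=
    card_le_card (monotone_filter_right _ fun _ _ hi => ⟨hi.1, hi.2.trans h⟩)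
  omega

theorem invCode_injective : Function.Injective (invCode (n := n)) := by
  intro σ π h
  have hv : ∀ j, invVec n σ j = invVec n π j := fun j => congrArg Fin.val (congrFun h j)
  refine Equiv.ext fun j => ?_
  induction j using WellFoundedLT.induction with
  | ind j ih =>
    exact le_antisymm (le_apply_of_invVec_eq (fun i hi => (ih i hi).symm) (hv j).symm)
      (le_apply_of_invVec_eq ih (hv j))

theorem card_pi_fin_sub : Fintype.card (∀ j : Fin n, Fin (n - j)) = n.factorial := by
  rw [Fintype.card_pi]
  simp only [Fintype.card_fin]
  rw [Fin.prod_univ_eq_prod_range (fun i => n - i) n, ← Nat.descFactorial_eq_prod_range,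
    Nat.descFactorial_self]

noncomputable def invCodeEquiv : Equiv.Perm (Fin n) ≃ (∀ j : Fin n, Fin (n - j)) :=
  Equiv.ofBijective invCode <| (Fintype.bijective_iff_injective_and_card _).2
    ⟨invCode_injective, by rw [Fintype.card_perm, Fintype.card_fin, card_pi_fin_sub]⟩

theorem invVec_invCodeEquiv_symm (c : ∀ j : Fin n, Fin (n - j)) (j : Fin n) :
    invVec n (invCodeEquiv.symm c) j = c j :=
  congrArg Fin.val (congrFun (invCodeEquiv.apply_symm_apply c) j)

theorem exists_min_right_apply_gt (σ : Equiv.Perm (Fin n)) {j : Fin n}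
    (h : invVec n σ j + 1 < n - j) :
    ∃ p, j < p ∧ σ j < σ p ∧ ∀ m, j < m → σ j < σ m → σ p ≤ σ m := by
  have hne : ({i | j < i ∧ σ j < σ i} : Finset (Fin n)).Nonempty := by
    by_contra! hemp
    have hle : #(Ioi j) ≤ invVec n σ j := by
      refine card_le_card fun i hi => ?_
      have hji : j < i := by simpa using hi
      have hσ : ¬σ j < σ i := fun hσ => (eq_empty_iff_forall_notMem.1 hemp i) (by simp [hji, hσ])
      simpa [invVec, hji] using lt_of_le_of_ne (not_lt.1 hσ) (σ.injective.ne hji.ne')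
    rw [Fin.card_Ioi] at hle
    omega
  obtain ⟨p, hp, hmin⟩ := exists_min_image _ σ hne
  simp only [mem_filter, mem_univ, true_and] at hp hmin
  exact ⟨p, hp.1, hp.2, fun m hjm hσm => hmin m ⟨hjm, hσm⟩⟩

theorem invVec_mul_swap_of_ne (σ : Equiv.Perm (Fin n)) {j p : Fin n} (hjp : j < p)
    (hσ : σ j < σ p) (hgap : ∀ m, j < m → σ j < σ m → σ p ≤ σ m) {m : Fin n} (hm : m ≠ j) :
    invVec n (σ * Equiv.swap j p) m = invVec n σ m := by
  have hinj : ∀ x y, σ x = σ y → x = y := fun x y h => σ.injective h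
  rw [invVec, invVec, card_filter, card_filter]
  simp only [Equiv.Perm.mul_apply]
  rcases lt_or_gt_of_ne hm with hmj | hmj
  · -- both swapped positions lie to the right of `m`, so reindexing by the swap matches the terms
    rw [← Equiv.sum_comp (Equiv.swap j p)]
    refine sum_congr rfl fun i _ => ?_
    simp only [Equiv.swap_apply_def]
    grind
  · refine sum_congr rfl fun i _ => ?_
    simp only [Equiv.swap_apply_def]
    grind

theorem invVec_mul_swap_self (σ : Equiv.Perm (Fin n)) {j p : Fin n} (hjp : j < p)
    (hσ : σ j < σ p) (hgap : ∀ m, j < m → σ j < σ m → σ p ≤ σ m) :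
    invVec n (σ * Equiv.swap j p) j = invVec n σ j + 1 := by
  have hinj : ∀ x y, σ x = σ y → x = y := fun x y h => σ.injective h
  rw [invVec, invVec, ← card_insert_of_notMem (a := p) (by simp [hσ.not_gt])]
  congr 1
  ext i
  simp only [mem_filter, mem_univ, true_and, mem_insert, Equiv.Perm.mul_apply,
    Equiv.swap_apply_left, Equiv.swap_apply_def]
  grind

theorem kendall_invCodeEquiv_symm (c : ∀ j : Fin n, Fin (n - j)) :
    (kendall n (invCodeEquiv.symm c) 1 : ℝ) = sumVal c := by
  simp [kendall_one_eq_sum_invVec, invVec_invCodeEquiv_symm, sumVal]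

end InversionCode

section Expectation
variable {n : ℕ}

theorem monotone_meanKendall_invCodeEquiv_symm {θ : ℝ} (hθ : 0 ≤ θ) :
    Monotone fun c : ∀ j : Fin n, Fin (n - j) => meanKendall θ (invCodeEquiv.symm c) := by
  refine monotone_of_le_update_succ fun c j x hx => ?_
  set σ := invCodeEquiv.symm c
  obtain ⟨p, hjp, hσ, hgap⟩ := exists_min_right_apply_gt σ (j := j) (by
    rw [invVec_invCodeEquiv_symm]; have := x.isLt; omega)
  have hswap : invCodeEquiv.symm (Function.update c j x) = σ * Equiv.swap j p := by
    refine invCodeEquiv.symm_apply_eq.2 (funext fun m => Fin.ext ?_)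
    show (Function.update c j x m : ℕ) = invVec n (σ * Equiv.swap j p) m
    by_cases hm : m = j
    · subst hm
      rw [invVec_mul_swap_self σ hjp hσ hgap, invVec_invCodeEquiv_symm, Function.update_self, hx]
    · rw [invVec_mul_swap_of_ne σ hjp hσ hgap hm, invVec_invCodeEquiv_symm,
        Function.update_of_ne hm]
  rw [hswap]
  exact meanKendall_le_mul_swap hθ hjp hσ hgap

theorem sum_sum_mallows_mul_kendall (θ η : ℝ) (σ₀ : Equiv.Perm (Fin n)) :
    ∑ σ, ∑ τ, mallows n θ σ₀ σ * mallows n η σ₀ τ * kendall n σ τ =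
      ∑ c : ∀ j : Fin n, Fin (n - j), meanKendall η (invCodeEquiv.symm c) * gibbs sumVal θ c := by
  have hτ : ∀ ρ, ∑ τ, mallows n η σ₀ τ * kendall n (ρ * σ₀) τ = meanKendall η ρ := by
    intro ρ
    rw [← Equiv.sum_comp (Equiv.mulRight σ₀)]
    simp [meanKendall, mallows_mul_right, kendall_mul_right]
  have hσ : ∀ c, mallows n θ σ₀ (invCodeEquiv.symm c * σ₀) = gibbs sumVal θ c := by
    intro c
    rw [mallows_mul_right, mallows_eq_gibbs, ← gibbs_comp_equiv invCodeEquiv.symm]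
    exact congrArg (gibbs · θ c) (funext kendall_invCodeEquiv_symm)
  rw [← Equiv.sum_comp (invCodeEquiv.symm.trans (Equiv.mulRight σ₀))]
  refine sum_congr rfl fun c _ => ?_
  simp only [Equiv.trans_apply, Equiv.coe_mulRight, mul_assoc, ← mul_sum, hτ, hσ]
  exact mul_comm _ _

end Expectation

theorem expected_pairwise_distance_antitone_general (n : ℕ) (θ θ' θ'' : ℝ)
    (hle : θ ≤ θ') (hθ'' : 0 < θ'') (σ₀ : Equiv.Perm (Fin n)) :
    (∑ σ : Equiv.Perm (Fin n), ∑ τ : Equiv.Perm (Fin n),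
        mallows n θ' σ₀ σ * mallows n θ'' σ₀ τ * kendall n σ τ) ≤
      ∑ σ : Equiv.Perm (Fin n), ∑ τ : Equiv.Perm (Fin n),
        mallows n θ σ₀ σ * mallows n θ'' σ₀ τ * kendall n σ τ := by
  have : Nonempty (∀ j : Fin n, Fin (n - j)) := invCodeEquiv.symm.nonempty
  rw [sum_sum_mallows_mul_kendall, sum_sum_mallows_mul_kendall]
  exact sum_mul_gibbs_le_of_le sumVal_mono sumVal_inf_add_sumVal_sup
    (fun c => meanKendall_nonneg θ'' _) (monotone_meanKendall_invCodeEquiv_symm hθ''.le) hle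

/-- Monotonicity of the expected pairwise Kendall distance in the dispersion parameter:
for `θ ≤ θ'` and an independent `τ ~ M(σ₀,θ'')`,
`E[d(σ_{θ'}, τ)] ≤ E[d(σ_θ, τ)]`. -/
theorem expected_pairwise_distance_antitone (n : ℕ) (θ θ' θ'' : ℝ) (hθ : 0 < θ)
    (hle : θ ≤ θ') (hθ'' : 0 < θ'') (σ₀ : Equiv.Perm (Fin n)) :
    (∑ σ : Equiv.Perm (Fin n), ∑ τ : Equiv.Perm (Fin n),
        mallows n θ' σ₀ σ * mallows n θ'' σ₀ τ * kendall n σ τ) ≤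
      ∑ σ : Equiv.Perm (Fin n), ∑ τ : Equiv.Perm (Fin n),
        mallows n θ σ₀ σ * mallows n θ'' σ₀ τ * kendall n σ τ :=
  expected_pairwise_distance_antitone_general n θ θ' θ'' hle hθ'' σ₀
end

section
/- Under a Mallows model M(e, θ) with θ > 0 on S_n, for any items i < i', the probability that item i appears in the top-k positions is at least the probability that item i' does: P(σ(i) ≤ k) ≥ P(σ(i') ≤ k). -/
open Finset

/-!
Right multiplication by the transposition of `i < i'` exchanges the ranks of the two items, so it
maps the permutations with `σ i' < k ≤ σ i` bijectively onto those with `σ i < k ≤ σ i'`. On the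
latter the two items are in order, and putting them out of order can only add inversions, hence
can only lower the Mallows weight `exp (-θ · #inversions)`.
-/

theorem swap_lt_swap_of_lt {α : Type*} [LinearOrder α] {i j a b : α} (hij : i < j)
    (hab : a < b) (ha : a ≠ i) (hb : b ≠ j) : Equiv.swap i j a < Equiv.swap i j b := by
  rcases eq_or_ne a j with rfl | haj <;> rcases eq_or_ne b i with rfl | hbi
  · exact absurd (hij.trans hab) (lt_irrefl _)
  · rw [Equiv.swap_apply_right, Equiv.swap_apply_of_ne_of_ne hbi hb]
    exact hij.trans hab
  · rw [Equiv.swap_apply_left, Equiv.swap_apply_of_ne_of_ne ha haj]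
    exact hab.trans hij
  · rwa [Equiv.swap_apply_of_ne_of_ne ha haj, Equiv.swap_apply_of_ne_of_ne hbi hb]

section Inversions

variable {α : Type*} [Fintype α] [LinearOrder α]

def inversions (σ : Equiv.Perm α) : Finset (α × α) :=
  univ.filter fun p => p.1 < p.2 ∧ σ p.2 < σ p.1

/-- The injection relabels an inversion `(a, b)` of `σ` through the swap when the swap keeps
`a, b` in order; the remaining inversions, of the form `(i, b)` or `(a, j)`, stay inversions
because `σ i < σ j`. -/
theorem card_inversions_le_mul_swap (σ : Equiv.Perm α) {i j : α} (hij : i < j)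
    (hσ : σ i < σ j) : #(inversions σ) ≤ #(inversions (σ * Equiv.swap i j)) := by
  set s := Equiv.swap i j
  have hss (x : α) : s (s x) = x := Equiv.swap_apply_self i j x
  refine card_le_card_of_injOn (fun p => if s p.1 < s p.2 then (s p.1, s p.2) else p) ?_ ?_
  · rintro ⟨a, b⟩ hp
    simp only [inversions, coe_filter, mem_univ, true_and, Set.mem_ofPred_eq] at hp ⊢
    obtain ⟨hab, hba⟩ := hp
    split_ifs with hs
    · simpa [Equiv.Perm.mul_apply, hss] using ⟨hs, hba⟩
    refine ⟨hab, ?_⟩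
    simp only [Equiv.Perm.mul_apply]
    by_cases ha : a = i
    · subst ha
      have hbj : b ≠ j := by rintro rfl; exact hba.not_gt hσ
      rw [Equiv.swap_apply_left, Equiv.swap_apply_of_ne_of_ne hab.ne' hbj]
      exact hba.trans hσ
    · have hbj : b = j := by_contra fun hbj => hs (swap_lt_swap_of_lt hij hab ha hbj)
      subst hbj
      rw [Equiv.swap_apply_right, Equiv.swap_apply_of_ne_of_ne ha hab.ne]
      exact hσ.trans hba
  · rintro ⟨a, b⟩ hp ⟨c, d⟩ hq hpq
    simp only [inversions, coe_filter, mem_univ, true_and, Set.mem_ofPred_eq] at hp hq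
    dsimp only at hpq
    split_ifs at hpq with h₁ h₂ h₂ <;> simp only [Prod.mk.injEq] at hpq
    · rw [s.injective hpq.1, s.injective hpq.2]
    · exact absurd (by rw [← hpq.1, ← hpq.2, hss, hss]; exact hp.1) h₂
    · exact absurd (by rw [hpq.1, hpq.2, hss, hss]; exact hq.1) h₁
    · rw [hpq.1, hpq.2]

end Inversions

theorem kendall_one_eq_card_inversions {n : ℕ} (σ : Equiv.Perm (Fin n)) :
    kendall n σ 1 = #(inversions σ) := by
  unfold kendall inversions
  congr 1
  refine filter_congr fun p _ => ?_
  simp only [Equiv.Perm.one_apply]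
  constructor
  · rintro ⟨hlt, ⟨-, hgt⟩ | ⟨hσ, -⟩⟩
    exacts [absurd hlt hgt.not_gt, ⟨hlt, hσ⟩]
  · rintro ⟨hlt, hσ⟩
    exact ⟨hlt, Or.inr ⟨hσ, hlt⟩⟩

theorem mallows_one_le_of_kendall_le {n : ℕ} {θ : ℝ} (hθ : 0 ≤ θ) {σ τ : Equiv.Perm (Fin n)}
    (h : kendall n σ 1 ≤ kendall n τ 1) : mallows n θ 1 τ ≤ mallows n θ 1 σ := by
  unfold mallows
  gcongr ?_ / _
  exact Real.exp_le_exp.2 (mul_le_mul_of_nonpos_left (by exact_mod_cast h) (neg_nonpos.2 hθ))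

theorem sum_filter_le_sum_filter_of_perm {ι M : Type*} [Fintype ι]
    [AddCommMonoid M] [PartialOrder M] [IsOrderedAddMonoid M]
    (w : ι → M) (e : Equiv.Perm ι) {P Q : ι → Prop} [DecidablePred P] [DecidablePred Q]
    (hP : ∀ x, P (e x) ↔ Q x) (hQ : ∀ x, Q (e x) ↔ P x)
    (hw : ∀ x, Q x → ¬ P x → w (e x) ≤ w x) :
    ∑ x with P x, w x ≤ ∑ x with Q x, w x := by
  rw [← sum_filter_add_sum_filter_not (univ.filter P) Q,
    ← sum_filter_add_sum_filter_not (univ.filter Q) P,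
    filter_filter, filter_filter, filter_filter, filter_filter]
  have hreindex : ∑ x with P x ∧ ¬ Q x, w x = ∑ x with Q x ∧ ¬ P x, w (e x) := by
    rw [sum_filter, sum_filter, ← Equiv.sum_comp e]
    simp_rw [hP, hQ]
  gcongr ?_ + ?_
  · simp_rw [and_comm (a := P _)]; rfl
  · rw [hreindex]
    exact sum_le_sum fun x hx => by simp only [mem_filter] at hx; exact hw x hx.2.1 hx.2.2

/-- Ranks are 0-indexed, so the paper's `σ(i) ≤ k` reads `(σ i : ℕ) < k`. -/
theorem topk_probability_monotone_general (n : ℕ) (θ : ℝ) (hθ : 0 < θ) (k : ℕ)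
    (i i' : Fin n) (hii' : i < i') :
    ∑ σ ∈ Finset.univ.filter (fun σ : Equiv.Perm (Fin n) => ((σ i') : ℕ) < k),
        mallows n θ 1 σ ≤
      ∑ σ ∈ Finset.univ.filter (fun σ : Equiv.Perm (Fin n) => ((σ i) : ℕ) < k),
        mallows n θ 1 σ := by
  have hs (σ : Equiv.Perm (Fin n)) :
      (σ * Equiv.swap i i') i = σ i' ∧ (σ * Equiv.swap i i') i' = σ i := by
    simp [Equiv.Perm.mul_apply]
  refine sum_filter_le_sum_filter_of_perm _ (Equiv.mulRight (Equiv.swap i i'))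
    (fun σ => by simp [hs]) (fun σ => by simp [hs]) fun σ hσi hσi' => ?_
  have hlt : σ i < σ i' := Fin.lt_def.2 (lt_of_lt_of_le hσi (not_lt.1 hσi'))
  refine mallows_one_le_of_kendall_le hθ.le ?_
  rw [kendall_one_eq_card_inversions, kendall_one_eq_card_inversions]
  exact card_inversions_le_mul_swap σ hii' hlt

/-- Under `M(e,θ)`, smaller-indexed items are more likely to appear in the top-`k`:
for items `i < i'`, `P(σ(i) ≤ k) ≥ P(σ(i') ≤ k)` (ranks are 0-indexed here, so
"rank ≤ k" reads `(σ i).val < k`). -/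
theorem topk_probability_monotone (n : ℕ) (θ : ℝ) (hθ : 0 < θ) (k : ℕ) (hk : k ≤ n)
    (i i' : Fin n) (hii' : i < i') :
    ∑ σ ∈ Finset.univ.filter (fun σ : Equiv.Perm (Fin n) => ((σ i') : ℕ) < k),
        mallows n θ 1 σ ≤
      ∑ σ ∈ Finset.univ.filter (fun σ : Equiv.Perm (Fin n) => ((σ i) : ℕ) < k),
        mallows n θ 1 σ :=
  topk_probability_monotone_general n θ hθ k i i' hii'
end
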